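/- arXiv:1511.03241 — 4 statements merged into one kernel-verified Lean document; each statement's English description precedes it below -/
import Mathlib

section
/- The set of optimal solutions of (LP) equals the intersection of the set of optimal solutions of (LP') with X; that is, X* = X** ∩ X. -/
open Finset

/-- The feasible set `X` of the linear program (LP). -/
def XsetDef {I : Type*} [Fintype I] [DecidableEq I]
    (Kbar : Finset (I → ℕ)) (ρ : I → ℝ) : Set ((I → ℕ) → ℝ) :=
  {x | (∀ k ∈ Kbar.erase 0, 0 ≤ x k) ∧ ∀ i : I, ∑ k ∈ Kbar.erase 0, (k i : ℝ) * x k = ρ i}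

/-- The set `X*` of optimal solutions of (LP). -/
def XstarDef {I : Type*} [Fintype I] [DecidableEq I]
    (Kbar : Finset (I → ℕ)) (ρ : I → ℝ) : Set ((I → ℕ) → ℝ) :=
  {x ∈ XsetDef Kbar ρ |
    ∀ y ∈ XsetDef Kbar ρ, ∑ k ∈ Kbar.erase 0, x k ≤ ∑ k ∈ Kbar.erase 0, y k}

/-- The feasible set of the relaxed linear program (LP'). -/
def XsetDef' {I : Type*} [Fintype I] [DecidableEq I]
    (Kbar : Finset (I → ℕ)) (ρ : I → ℝ) : Set ((I → ℕ) → ℝ) :=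
  {x | (∀ k ∈ Kbar.erase 0, 0 ≤ x k) ∧ ∀ i : I, ρ i ≤ ∑ k ∈ Kbar.erase 0, (k i : ℝ) * x k}

/-- The set `X**` of optimal solutions of (LP'). -/
def XstarstarDef {I : Type*} [Fintype I] [DecidableEq I]
    (Kbar : Finset (I → ℕ)) (ρ : I → ℝ) : Set ((I → ℕ) → ℝ) :=
  {x ∈ XsetDef' Kbar ρ |
    ∀ y ∈ XsetDef' Kbar ρ, ∑ k ∈ Kbar.erase 0, x k ≤ ∑ k ∈ Kbar.erase 0, y k}

/-!
An optimal solution of (LP) is feasible for (LP'), and (LP') is a relaxation of (LP), so the whole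
content is that (LP') never does better than (LP): every `y` feasible for (LP') can be turned into
some `z ∈ X` of no larger cost. Fix a customer type `i` whose load `s` exceeds `ρ i`, and let
`α = ρ i / s`. Keep each configuration `k` with weight `α` and replace it, with weight `1 - α`,
by `k` with its `i`-th entry set to `0`; by monotonicity of `K̄` this is again a configuration, or
it is `0` and is dropped. The load of type `i` is scaled by `α`, the other loads are unchanged, and the
cost does not increase. Doing this for one type after another makes every constraint tight.
-/

open Function

namespace PackingLP

section Mix

variable {κ : Type*} [DecidableEq κ]

/-- `α • y + (1 - α) • g_* y` for `y` supported on `K`. -/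
def mix (K : Finset κ) (g : κ → κ) (α : ℝ) (y : κ → ℝ) (k' : κ) : ℝ :=
  ∑ k ∈ K, y k * ((if k = k' then α else 0) + (if g k = k' then 1 - α else 0))

theorem sum_mul_mix {K L : Finset κ} {g : κ → κ} (hKL : K ⊆ L) (hg : ∀ k ∈ K, g k ∈ L)
    (α : ℝ) (y f : κ → ℝ) :
    ∑ k' ∈ L, f k' * mix K g α y k' = ∑ k ∈ K, y k * (α * f k + (1 - α) * f (g k)) := by
  simp only [mix, mul_sum]
  rw [sum_comm]
  refine sum_congr rfl fun k hk => ?_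
  simp only [mul_add, mul_ite, mul_zero, sum_add_distrib, sum_ite_eq, hKL hk, hg k hk, if_true]
  ring

theorem mix_nonneg {K : Finset κ} {g : κ → κ} {α : ℝ} {y : κ → ℝ} (hα₀ : 0 ≤ α) (hα₁ : α ≤ 1)
    (hy : ∀ k ∈ K, 0 ≤ y k) (k' : κ) : 0 ≤ mix K g α y k' := by
  refine sum_nonneg fun k hk => mul_nonneg (hy k hk) (add_nonneg ?_ ?_) <;>
    split_ifs <;> linarith

end Mix

variable {I : Type*} [Fintype I] [DecidableEq I]

def load (Kbar : Finset (I → ℕ)) (x : (I → ℕ) → ℝ) (i : I) : ℝ :=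
  ∑ k ∈ Kbar.erase 0, (k i : ℝ) * x k

def cost (Kbar : Finset (I → ℕ)) (x : (I → ℕ) → ℝ) : ℝ :=
  ∑ k ∈ Kbar.erase 0, x k

omit [DecidableEq I] in
theorem load_eq_sum (Kbar : Finset (I → ℕ)) (x : (I → ℕ) → ℝ) (i : I) :
    load Kbar x i = ∑ k ∈ Kbar, (k i : ℝ) * x k :=
  sum_erase Kbar (by simp)

theorem XsetDef_subset_XsetDef' (Kbar : Finset (I → ℕ)) (ρ : I → ℝ) :
    XsetDef Kbar ρ ⊆ XsetDef' Kbar ρ :=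
  fun _ hx => ⟨hx.1, fun i => (hx.2 i).ge⟩

theorem nonneg_of_mem_XsetDef {Kbar : Finset (I → ℕ)} {ρ : I → ℝ} {x : (I → ℕ) → ℝ}
    (hx : x ∈ XsetDef Kbar ρ) (i : I) : 0 ≤ ρ i :=
  hx.2 i ▸ sum_nonneg fun k hk => mul_nonneg (Nat.cast_nonneg _) (hx.1 k hk)

def thin (Kbar : Finset (I → ℕ)) (i : I) (α : ℝ) (y : (I → ℕ) → ℝ) : (I → ℕ) → ℝ :=
  mix (Kbar.erase 0) (fun k => update k i 0) α y

section Thin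

variable {Kbar : Finset (I → ℕ)}
  (hmono : ∀ k ∈ Kbar, ∀ k' : I → ℕ, (∀ i, k' i ≤ k i) → k' ∈ Kbar)
include hmono

theorem update_zero_mem {k : I → ℕ} (hk : k ∈ Kbar.erase 0) (i : I) : update k i 0 ∈ Kbar := by
  refine hmono k (mem_of_mem_erase hk) _ fun j => ?_
  rcases eq_or_ne j i with rfl | hj <;> simp [*]

theorem sum_mul_thin (i : I) (α : ℝ) (y f : (I → ℕ) → ℝ) :
    ∑ k' ∈ Kbar, f k' * thin Kbar i α y k' =
      ∑ k ∈ Kbar.erase 0, y k * (α * f k + (1 - α) * f (update k i 0)) :=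
  sum_mul_mix (erase_subset _ _) (fun _ hk => update_zero_mem hmono hk i) α y f

theorem load_thin_self (i : I) (α : ℝ) (y : (I → ℕ) → ℝ) :
    load Kbar (thin Kbar i α y) i = α * load Kbar y i := by
  rw [load_eq_sum, sum_mul_thin hmono, load, mul_sum]
  exact sum_congr rfl fun k _ => by
    simp only [update_self, CharP.cast_eq_zero, mul_zero, add_zero]; ring

theorem load_thin_of_ne {i j : I} (hji : j ≠ i) (α : ℝ) (y : (I → ℕ) → ℝ) :
    load Kbar (thin Kbar i α y) j = load Kbar y j := by
  rw [load_eq_sum, sum_mul_thin hmono, load]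
  exact sum_congr rfl fun k _ => by
    simp only [ne_eq, hji, not_false_eq_true, update_of_ne]; ring

theorem cost_thin_le (i : I) {α : ℝ} (hα₀ : 0 ≤ α) (hα₁ : α ≤ 1) {y : (I → ℕ) → ℝ}
    (hy : ∀ k ∈ Kbar.erase 0, 0 ≤ y k) : cost Kbar (thin Kbar i α y) ≤ cost Kbar y :=
  calc cost Kbar (thin Kbar i α y)
      ≤ ∑ k' ∈ Kbar, thin Kbar i α y k' :=
        sum_le_sum_of_subset_of_nonneg (erase_subset 0 Kbar) fun k' _ _ =>
          mix_nonneg hα₀ hα₁ hy k'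
    _ = cost Kbar y := by
        rw [← sum_congr rfl fun k' _ => one_mul (thin Kbar i α y k'), sum_mul_thin hmono, cost]
        exact sum_congr rfl fun k _ => by ring

theorem exists_load_eq {ρ : I → ℝ} {y : (I → ℕ) → ℝ} (hy : y ∈ XsetDef' Kbar ρ) {i : I}
    (hρi : 0 ≤ ρ i) :
    ∃ z ∈ XsetDef' Kbar ρ, cost Kbar z ≤ cost Kbar y ∧ load Kbar z i = ρ i ∧
      ∀ j ≠ i, load Kbar z j = load Kbar y j := by
  set α := ρ i / load Kbar y i
  have hα₀ : 0 ≤ α := div_nonneg hρi (hρi.trans (hy.2 i))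
  have hα₁ : α ≤ 1 := div_le_one_of_le₀ (hy.2 i) (hρi.trans (hy.2 i))
  -- a vanishing load forces `ρ i = 0`, and then the junk value `α = 0` is the right factor
  have hαload : α * load Kbar y i = ρ i :=
    div_mul_cancel_of_imp fun h => le_antisymm (h ▸ hy.2 i) hρi
  have hload_i := (load_thin_self hmono i α y).trans hαload
  have hload_ne := fun j (hj : j ≠ i) => load_thin_of_ne hmono hj α y
  refine ⟨thin Kbar i α y, ⟨fun k _ => mix_nonneg hα₀ hα₁ hy.1 k, fun j => ?_⟩,
    cost_thin_le hmono i hα₀ hα₁ hy.1, hload_i, hload_ne⟩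
  rcases eq_or_ne j i with rfl | hj
  · exact hload_i.ge
  · exact (hy.2 j).trans (hload_ne j hj).ge

theorem exists_mem_XsetDef_cost_le {ρ : I → ℝ} (hρ : ∀ i, 0 ≤ ρ i) {y : (I → ℕ) → ℝ}
    (hy : y ∈ XsetDef' Kbar ρ) : ∃ z ∈ XsetDef Kbar ρ, cost Kbar z ≤ cost Kbar y := by
  suffices ∀ S : Finset I, ∃ z ∈ XsetDef' Kbar ρ, cost Kbar z ≤ cost Kbar y ∧
      ∀ i ∈ S, load Kbar z i = ρ i by
    obtain ⟨z, hz, hcost, hload⟩ := this univ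
    exact ⟨z, ⟨hz.1, fun i => hload i (mem_univ i)⟩, hcost⟩
  intro S
  induction S using Finset.induction_on with
  | empty => exact ⟨y, hy, le_rfl, by simp⟩
  | insert i S hiS ih =>
    obtain ⟨z, hz, hcost, hload⟩ := ih
    obtain ⟨z', hz', hcost', hload_i, hload_ne⟩ := exists_load_eq hmono hz (hρ i)
    refine ⟨z', hz', hcost'.trans hcost, fun j hj => ?_⟩
    rcases mem_insert.mp hj with rfl | hjS
    · exact hload_i
    · exact (hload_ne j (ne_of_mem_of_not_mem hjS hiS)).trans (hload j hjS)

end Thin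

end PackingLP

theorem lp_opt_eq_lp'_opt_inter_X_general
    {I : Type*} [Fintype I] [DecidableEq I]
    (Kbar : Finset (I → ℕ))
    (hmono : ∀ k ∈ Kbar, ∀ k' : I → ℕ, (∀ i, k' i ≤ k i) → k' ∈ Kbar)
    (ρ : I → ℝ) :
    XstarDef Kbar ρ = XstarstarDef Kbar ρ ∩ XsetDef Kbar ρ := by
  ext x
  constructor
  · rintro ⟨hx, hxopt⟩
    refine ⟨⟨PackingLP.XsetDef_subset_XsetDef' Kbar ρ hx, fun y hy => ?_⟩, hx⟩
    obtain ⟨z, hz, hzy⟩ :=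
      PackingLP.exists_mem_XsetDef_cost_le hmono (PackingLP.nonneg_of_mem_XsetDef hx) hy
    exact (hxopt z hz).trans hzy
  · rintro ⟨⟨-, hxopt⟩, hx⟩
    exact ⟨hx, fun y hy => hxopt y (PackingLP.XsetDef_subset_XsetDef' Kbar ρ hy)⟩

/-- `X* = X** ∩ X`. -/
theorem lp_opt_eq_lp'_opt_inter_X
    {I : Type*} [Fintype I] [DecidableEq I] [Nonempty I]
    (Kbar : Finset (I → ℕ))
    (h0 : (0 : I → ℕ) ∈ Kbar)
    (hunit : ∀ i : I, Pi.single i 1 ∈ Kbar)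
    (hmono : ∀ k ∈ Kbar, ∀ k' : I → ℕ, (∀ i, k' i ≤ k i) → k' ∈ Kbar)
    (ρ : I → ℝ) (hρ : ∀ i, 0 < ρ i) :
    XstarDef Kbar ρ = XstarstarDef Kbar ρ ∩ XsetDef Kbar ρ :=
  lp_opt_eq_lp'_opt_inter_X_general Kbar hmono ρ
end

section
/- Let a ∈ (0,1). The function L^(a) attains a unique minimum over X, and a point x ∈ X is this unique minimizer if and only if x has a product-form representation, i.e. there exists a vector ν ∈ ℝ^I such that x_k = (a/c_k)·exp(b·Σ_{i∈I} k_i ν_i) = (1/c_k)·a^{1 − Σ_{i∈I} k_i ν_i} for every k ∈ K. -/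
open Finset

/-- `c_k = ∏_i (k_i)!`. -/
noncomputable def confC {I : Type*} [Fintype I] (k : I → ℕ) : ℝ :=
  ∏ i, (Nat.factorial (k i) : ℝ)

/-- The Lyapunov function `L^(a)(x) = -(1/log a) ∑_{k∈K} x_k log(x_k c_k/(e a))`.
(The convention `0 log 0 = 0` holds automatically, since `Real.log 0 = 0`.) -/
noncomputable def Lfun {I : Type*} [Fintype I] [DecidableEq I]
    (Kbar : Finset (I → ℕ)) (a : ℝ) (x : (I → ℕ) → ℝ) : ℝ :=
  -(1 / Real.log a) *
    ∑ k ∈ Kbar.erase 0, x k * Real.log (x k * confC k / (Real.exp 1 * a))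

/-!
Up to the positive factor `1 / b`, `L^(a)(x)` is `∑_k x_k log (x_k c_k / (e a))`. If `x` has product
form then `log (x_k c_k / (e a)) + 1 = ∑_i k_i ν_i`, so for `y ∈ X` the linear part of `L(y) - L(x)`
vanishes by the constraints and `b (L(y) - L(x)) = ∑_k x_k klFun (y_k / x_k) ≥ 0` (Gibbs'
inequality), with equality only if `y = x` on `K`. Hence a feasible product-form point is the unique
minimizer, and it remains to find one. The dual function
`G(ν) = ∑_k (a / c_k) exp (∑_i k_i ν_i) - ∑_i ρ_i ν_i` is coercive, since its terms `k = e_i` alone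
give `G(ν) ≥ ∑_i (a e^{ν_i} - ρ_i ν_i)`. At a global minimum `ν` of `G`, with
`x_k = (a / c_k) exp (∑_i k_i ν_i)`, the equations `∂G/∂ν_i = ∑_k k_i x_k - ρ_i = 0` say `x ∈ X`.
-/

open Filter Real InformationTheory

lemma tendsto_sum_comp_eval_cocompact_atTop {ι : Type*} [Fintype ι] {X : ι → Type*}
    [∀ i, TopologicalSpace (X i)] [∀ i, Nonempty (X i)] {h : ∀ i, X i → ℝ}
    (hc : ∀ i, Continuous (h i)) (ht : ∀ i, Tendsto (h i) (cocompact (X i)) atTop) :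
    Tendsto (fun x : ∀ i, X i => ∑ i, h i (x i)) (cocompact (∀ i, X i)) atTop := by
  classical
  rw [← coprodᵢ_cocompact, Filter.coprodᵢ, tendsto_iSup]
  intro i
  choose m hm using fun j => (hc j).exists_forall_le (ht j)
  have hle : ∀ x : ∀ j, X j, h i (x i) + ∑ j ∈ univ.erase i, h j (m j) ≤ ∑ j, h j (x j) := by
    intro x
    rw [← add_sum_erase _ _ (mem_univ i)]
    gcongr with j
    exact hm j _
  exact tendsto_atTop_mono hle (tendsto_atTop_add_const_right _ _ ((ht i).comp tendsto_comap))

lemma tendsto_mul_exp_sub_mul_cocompact_atTop {α β : ℝ} (hα : 0 < α) (hβ : 0 < β) :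
    Tendsto (fun s => α * Real.exp s - β * s) (cocompact ℝ) atTop := by
  rw [cocompact_eq_atBot_atTop, tendsto_sup]
  constructor
  · refine tendsto_atTop_mono (fun s => ?_) ((tendsto_neg_atBot_atTop).const_mul_atTop hβ)
    nlinarith [Real.exp_pos s]
  · have hquot : Tendsto (fun s => α * (Real.exp s / s) - β) atTop atTop :=
      tendsto_atTop_add_const_right _ _
        (by simpa using (Real.tendsto_exp_div_pow_atTop 1).const_mul_atTop hα)
    refine (tendsto_id.atTop_mul_atTop₀ hquot).congr' ?_
    filter_upwards [eventually_gt_atTop 0] with s hs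
    simp only [id]
    field_simp

lemma mul_log_mul_sub_mul_log_mul {s t w : ℝ} (hs : 0 < s) (ht : 0 ≤ t) (hw : w ≠ 0) :
    t * log (t * w) - s * log (s * w) = (log (s * w) + 1) * (t - s) + s * klFun (t / s) := by
  rcases ht.eq_or_lt with rfl | ht
  · simp only [zero_mul, log_zero, mul_zero, zero_div, klFun_zero]
    ring
  · rw [klFun, log_mul ht.ne' hw, log_mul hs.ne' hw, log_div ht.ne' hs.ne']
    field_simp
    ring

lemma mul_klFun_div_nonneg {s t : ℝ} (hs : 0 ≤ s) (ht : 0 ≤ t) : 0 ≤ s * klFun (t / s) :=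
  mul_nonneg hs (klFun_nonneg (div_nonneg ht hs))

section ProductForm

variable {I : Type*} [Fintype I]

noncomputable def productForm (a : ℝ) (ν : I → ℝ) (k : I → ℕ) : ℝ :=
  a / confC k * exp (∑ i, (k i : ℝ) * ν i)

lemma confC_pos (k : I → ℕ) : 0 < confC k :=
  prod_pos fun i _ => by exact_mod_cast (k i).factorial_pos

lemma productForm_pos {a : ℝ} (ha : 0 < a) (ν : I → ℝ) (k : I → ℕ) : 0 < productForm a ν k :=
  mul_pos (div_pos ha (confC_pos k)) (exp_pos _)

lemma productForm_mul_confC_div {a : ℝ} (ha : 0 < a) (ν : I → ℝ) (k : I → ℕ) :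
    productForm a ν k * (confC k / (exp 1 * a)) = exp (∑ i, (k i : ℝ) * ν i - 1) := by
  have := (confC_pos k).ne'
  rw [productForm, exp_sub]
  field_simp

lemma exists_eq_productForm_iff {S : Finset (I → ℕ)} {x : (I → ℕ) → ℝ} {a b : ℝ} (hb : b ≠ 0) :
    (∃ ν : I → ℝ, ∀ k ∈ S, x k = a / confC k * exp (b * ∑ i, (k i : ℝ) * ν i)) ↔
      ∃ ν, ∀ k ∈ S, x k = productForm a ν k := by
  have hscale : ∀ (ν : I → ℝ) (k : I → ℕ),
      a / confC k * exp (b * ∑ i, (k i : ℝ) * ν i) = productForm a (b • ν) k := by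
    simp [productForm, mul_sum, mul_left_comm]
  constructor
  · rintro ⟨ν, hν⟩
    exact ⟨b • ν, fun k hk => (hν k hk).trans (hscale ν k)⟩
  · rintro ⟨ν, hν⟩
    refine ⟨b⁻¹ • ν, fun k hk => ?_⟩
    rw [hscale, smul_inv_smul₀ hb]
    exact hν k hk

noncomputable def dualObjective (Kbar : Finset (I → ℕ)) (ρ : I → ℝ) (a : ℝ) (ν : I → ℝ) : ℝ :=
  ∑ k ∈ Kbar.erase 0, productForm a ν k - ∑ i, ρ i * ν i

lemma continuous_dualObjective (Kbar : Finset (I → ℕ)) (ρ : I → ℝ) (a : ℝ) :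
    Continuous (dualObjective Kbar ρ a) := by
  unfold dualObjective productForm
  fun_prop

variable [DecidableEq I]

lemma confC_single (i : I) : confC (Pi.single i 1 : I → ℕ) = 1 := by
  refine prod_eq_one fun j _ => ?_
  rcases eq_or_ne j i with rfl | hj <;> simp [*]

lemma productForm_single (a : ℝ) (ν : I → ℝ) (i : I) :
    productForm a ν (Pi.single i 1) = a * exp (ν i) := by
  simp [productForm, confC_single, Pi.single_apply]

lemma productForm_add_smul_single (a : ℝ) (ν : I → ℝ) (k : I → ℕ) (i : I) (s : ℝ) :
    productForm a (ν + s • Pi.single i 1) k = productForm a ν k * exp (k i * s) := by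
  simp [productForm, mul_add, sum_add_distrib, exp_add, Pi.single_apply, mul_assoc]

variable {Kbar : Finset (I → ℕ)} {ρ : I → ℝ} {a : ℝ}

lemma sum_le_dualObjective (ha : 0 < a) (hunit : ∀ i, Pi.single i 1 ∈ Kbar) (ν : I → ℝ) :
    ∑ i, (a * exp (ν i) - ρ i * ν i) ≤ dualObjective Kbar ρ a ν := by
  have hsingle : univ.image (fun i => (Pi.single i 1 : I → ℕ)) ⊆ Kbar.erase 0 := by
    simp [subset_iff, hunit]
  rw [dualObjective, sum_sub_distrib, sub_le_sub_iff_right]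
  calc ∑ i, a * exp (ν i) = ∑ i, productForm a ν (Pi.single i 1) := by
        simp only [productForm_single]
    _ = ∑ k ∈ univ.image (fun i => (Pi.single i 1 : I → ℕ)), productForm a ν k :=
        (sum_image fun i _ j _ hij => by_contra fun hne => by
          simpa [Pi.single_apply, hne] using congr_fun hij i).symm
    _ ≤ ∑ k ∈ Kbar.erase 0, productForm a ν k :=
        sum_le_sum_of_subset_of_nonneg hsingle fun k _ _ => (productForm_pos ha ν k).le

lemma tendsto_dualObjective_cocompact (ha : 0 < a) (hρ : ∀ i, 0 < ρ i)
    (hunit : ∀ i, Pi.single i 1 ∈ Kbar) :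
    Tendsto (dualObjective Kbar ρ a) (cocompact (I → ℝ)) atTop :=
  tendsto_atTop_mono (sum_le_dualObjective ha hunit)
    (tendsto_sum_comp_eval_cocompact_atTop (fun _ => by fun_prop)
      fun i => tendsto_mul_exp_sub_mul_cocompact_atTop ha (hρ i))

lemma hasDerivAt_dualObjective_add_smul_single (ν : I → ℝ) (i : I) :
    HasDerivAt (fun s : ℝ => dualObjective Kbar ρ a (ν + s • Pi.single i 1))
      (∑ k ∈ Kbar.erase 0, (k i : ℝ) * productForm a ν k - ρ i) 0 := by
  have hG : (fun s : ℝ => dualObjective Kbar ρ a (ν + s • Pi.single i 1)) = fun s =>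
      ∑ k ∈ Kbar.erase 0, productForm a ν k * exp (k i * s) - (∑ j, ρ j * ν j + ρ i * s) := by
    funext s
    simp [dualObjective, productForm_add_smul_single, mul_add, sum_add_distrib, Pi.single_apply]
  rw [hG]
  refine (HasDerivAt.fun_sum fun k _ => ?_).sub
    (by simpa using ((hasDerivAt_id' (0 : ℝ)).const_mul (ρ i)).const_add (∑ j, ρ j * ν j))
  simpa [mul_comm] using (((hasDerivAt_id' (0 : ℝ)).const_mul (k i : ℝ)).exp).const_mul
    (productForm a ν k)

lemma productForm_mem_XsetDef_of_forall_dualObjective_le (ha : 0 < a) {ν : I → ℝ}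
    (hν : ∀ μ, dualObjective Kbar ρ a ν ≤ dualObjective Kbar ρ a μ) :
    productForm a ν ∈ XsetDef Kbar ρ := by
  refine ⟨fun k _ => (productForm_pos ha ν k).le, fun i => ?_⟩
  have hmin : IsLocalMin (fun s : ℝ => dualObjective Kbar ρ a (ν + s • Pi.single i 1)) 0 :=
    Eventually.of_forall fun s => by simpa using hν _
  have := hmin.hasDerivAt_eq_zero (hasDerivAt_dualObjective_add_smul_single ν i)
  linarith

lemma exists_productForm_mem_XsetDef (ha : 0 < a) (hρ : ∀ i, 0 < ρ i)
    (hunit : ∀ i, Pi.single i 1 ∈ Kbar) : ∃ ν, productForm a ν ∈ XsetDef Kbar ρ :=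
  let ⟨ν, hν⟩ := (continuous_dualObjective Kbar ρ a).exists_forall_le
    (tendsto_dualObjective_cocompact ha hρ hunit)
  ⟨ν, productForm_mem_XsetDef_of_forall_dualObjective_le ha hν⟩

variable {x y : (I → ℕ) → ℝ}

lemma sum_mul_of_mem_XsetDef (hy : y ∈ XsetDef Kbar ρ) (ν : I → ℝ) :
    ∑ k ∈ Kbar.erase 0, (∑ i, (k i : ℝ) * ν i) * y k = ∑ i, ν i * ρ i := by
  simp_rw [sum_mul, ← hy.2, mul_sum]
  rw [sum_comm]
  exact sum_congr rfl fun _ _ => sum_congr rfl fun _ _ => by ring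

variable {ν : I → ℝ}

lemma Lfun_sub_Lfun_of_productForm (ha : 0 < a) (hx : x ∈ XsetDef Kbar ρ)
    (hxν : ∀ k ∈ Kbar.erase 0, x k = productForm a ν k) (hy : y ∈ XsetDef Kbar ρ) :
    Lfun Kbar a y - Lfun Kbar a x =
      -(1 / log a) * ∑ k ∈ Kbar.erase 0, x k * klFun (y k / x k) := by
  have hlin : ∑ k ∈ Kbar.erase 0, (∑ i, (k i : ℝ) * ν i) * (y k - x k) = 0 := by
    simp_rw [mul_sub, sum_sub_distrib, sum_mul_of_mem_XsetDef hy, sum_mul_of_mem_XsetDef hx,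
      sub_self]
  have hterm : ∀ k ∈ Kbar.erase 0,
      y k * log (y k * confC k / (exp 1 * a)) - x k * log (x k * confC k / (exp 1 * a)) =
        (∑ i, (k i : ℝ) * ν i) * (y k - x k) + x k * klFun (y k / x k) := by
    intro k hk
    have hw : confC k / (exp 1 * a) ≠ 0 := (div_pos (confC_pos k) (by positivity)).ne'
    rw [mul_div_assoc, mul_div_assoc, mul_log_mul_sub_mul_log_mul (hxν k hk ▸
      productForm_pos ha ν k) (hy.1 k hk) hw, hxν k hk, productForm_mul_confC_div ha, log_exp,
      sub_add_cancel]
  rw [Lfun, Lfun, ← mul_sub, ← sum_sub_distrib, sum_congr rfl hterm, sum_add_distrib, hlin,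
    zero_add]

lemma Lfun_le_of_productForm (ha : a ∈ Set.Ioo 0 1) (hx : x ∈ XsetDef Kbar ρ)
    (hxν : ∀ k ∈ Kbar.erase 0, x k = productForm a ν k) (hy : y ∈ XsetDef Kbar ρ) :
    Lfun Kbar a x ≤ Lfun Kbar a y := by
  have hc : 0 ≤ -(1 / log a) := by simpa using (log_neg ha.1 ha.2).le
  have hsum : 0 ≤ ∑ k ∈ Kbar.erase 0, x k * klFun (y k / x k) :=
    sum_nonneg fun k hk => mul_klFun_div_nonneg (hx.1 k hk) (hy.1 k hk)
  have := Lfun_sub_Lfun_of_productForm ha.1 hx hxν hy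
  nlinarith [mul_nonneg hc hsum]

lemma eq_of_Lfun_le_of_productForm (ha : a ∈ Set.Ioo 0 1) (hx : x ∈ XsetDef Kbar ρ)
    (hxν : ∀ k ∈ Kbar.erase 0, x k = productForm a ν k) (hy : y ∈ XsetDef Kbar ρ)
    (hle : Lfun Kbar a y ≤ Lfun Kbar a x) : ∀ k ∈ Kbar.erase 0, y k = x k := by
  have hc : 0 < -(1 / log a) := by simpa using log_neg ha.1 ha.2
  have hterm : ∀ k ∈ Kbar.erase 0, 0 ≤ x k * klFun (y k / x k) :=
    fun k hk => mul_klFun_div_nonneg (hx.1 k hk) (hy.1 k hk)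
  have hsum : ∑ k ∈ Kbar.erase 0, x k * klFun (y k / x k) = 0 := by
    have := Lfun_sub_Lfun_of_productForm ha.1 hx hxν hy
    refine le_antisymm ?_ (sum_nonneg hterm)
    nlinarith
  intro k hk
  have hxk : 0 < x k := hxν k hk ▸ productForm_pos ha.1 ν k
  have hk0 := (sum_eq_zero_iff_of_nonneg hterm).1 hsum k hk
  rw [mul_eq_zero, klFun_eq_zero_iff (div_nonneg (hy.1 k hk) hxk.le),
    div_eq_one_iff_eq hxk.ne'] at hk0
  exact hk0.resolve_left hxk.ne'

end ProductForm

theorem cvx_unique_min_product_form_general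
    {I : Type*} [Fintype I] [DecidableEq I]
    (Kbar : Finset (I → ℕ))
    (hunit : ∀ i : I, Pi.single i 1 ∈ Kbar)
    (ρ : I → ℝ) (hρ : ∀ i, 0 < ρ i)
    (a : ℝ) (ha : a ∈ Set.Ioo (0 : ℝ) 1)
    (b : ℝ) (hb : b = -Real.log a) :
    (∃ x ∈ XsetDef Kbar ρ, (∀ y ∈ XsetDef Kbar ρ, Lfun Kbar a x ≤ Lfun Kbar a y) ∧
        ∀ x' ∈ XsetDef Kbar ρ, (∀ y ∈ XsetDef Kbar ρ, Lfun Kbar a x' ≤ Lfun Kbar a y) →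
          ∀ k ∈ Kbar.erase 0, x' k = x k) ∧
      ∀ x ∈ XsetDef Kbar ρ,
        ((∀ y ∈ XsetDef Kbar ρ, Lfun Kbar a x ≤ Lfun Kbar a y) ↔
          ∃ ν : I → ℝ, ∀ k ∈ Kbar.erase 0,
            x k = (a / confC k) * Real.exp (b * ∑ i, (k i : ℝ) * ν i)) := by
  have hb₀ : b ≠ 0 := by simpa [hb] using (log_neg ha.1 ha.2).ne
  obtain ⟨ν₀, hν₀⟩ := exists_productForm_mem_XsetDef ha.1 hρ hunit
  have hpf₀ : ∀ k ∈ Kbar.erase 0, productForm a ν₀ k = productForm a ν₀ k := fun _ _ => rfl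
  refine ⟨⟨_, hν₀, fun y hy => Lfun_le_of_productForm ha hν₀ hpf₀ hy,
    fun x' hx' hmin => eq_of_Lfun_le_of_productForm ha hν₀ hpf₀ hx' (hmin _ hν₀)⟩,
    fun x hx => ?_⟩
  rw [exists_eq_productForm_iff hb₀]
  constructor
  · exact fun hmin => ⟨ν₀, eq_of_Lfun_le_of_productForm ha hν₀ hpf₀ hx (hmin _ hν₀)⟩
  · rintro ⟨ν, hν⟩ y hy
    exact Lfun_le_of_productForm ha hx hν hy

/-- Lemma: product-form characterization of the minimizer of `L^(a)` over `X`.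
`L^(a)` attains a unique minimum over `X` (unique in its coordinates on `K`), and a point
`x ∈ X` is this minimizer iff it has a product-form representation
`x_k = (a/c_k)·exp(b ∑_i k_i ν_i)` on `K`, for some `ν ∈ ℝ^I`, where `b = -log a`. -/
theorem cvx_unique_min_product_form
    {I : Type*} [Fintype I] [DecidableEq I] [Nonempty I]
    (Kbar : Finset (I → ℕ))
    (h0 : (0 : I → ℕ) ∈ Kbar)
    (hunit : ∀ i : I, Pi.single i 1 ∈ Kbar)
    (hmono : ∀ k ∈ Kbar, ∀ k' : I → ℕ, (∀ i, k' i ≤ k i) → k' ∈ Kbar)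
    (ρ : I → ℝ) (hρ : ∀ i, 0 < ρ i)
    (a : ℝ) (ha : a ∈ Set.Ioo (0 : ℝ) 1)
    (b : ℝ) (hb : b = -Real.log a) :
    (∃ x ∈ XsetDef Kbar ρ, (∀ y ∈ XsetDef Kbar ρ, Lfun Kbar a x ≤ Lfun Kbar a y) ∧
        ∀ x' ∈ XsetDef Kbar ρ, (∀ y ∈ XsetDef Kbar ρ, Lfun Kbar a x' ≤ Lfun Kbar a y) →
          ∀ k ∈ Kbar.erase 0, x' k = x k) ∧
      ∀ x ∈ XsetDef Kbar ρ,
        ((∀ y ∈ XsetDef Kbar ρ, Lfun Kbar a x ≤ Lfun Kbar a y) ↔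
          ∃ ν : I → ℝ, ∀ k ∈ Kbar.erase 0,
            x k = (a / confC k) * Real.exp (b * ∑ i, (k i : ℝ) * ν i)) :=
  cvx_unique_min_product_form_general Kbar hunit ρ hρ a ha b hb
end

section
/- Let a ∈ (0,1) and let x ∈ ℝ^K have all coordinates positive (with the convention x_0 = a). Then Ξ(x) ≤ 0, and Ξ(x) = 0 if and only if the pairwise balance condition k'_i x_{k−e_i} x_{k'} = k_i x_k x_{k'−e_i} holds for every pair of edges (k,i), (k',i) ∈ M. -/
open Finset

/-- The coordinates of `x` extended by the convention `x_0 = a`. -/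
def xeDef {I : Type*} [Fintype I]
    (a : ℝ) (x : (I → ℕ) → ℝ) (m : I → ℕ) : ℝ :=
  if m = 0 then a else x m

/-- `x_{(i)} = x_0 + ∑_{k ∈ K : k + e_i ∈ K} x_k`, with the convention `x_0 = a`. -/
noncomputable def xIdxDef {I : Type*} [Fintype I] [DecidableEq I]
    (Kbar : Finset (I → ℕ)) (a : ℝ) (x : (I → ℕ) → ℝ) (i : I) : ℝ :=
  a + ∑ m ∈ (Kbar.erase 0).filter (fun m => m + Pi.single i 1 ∈ Kbar.erase 0), x m

/-- `ξ_{k,k',i}(x)`, with `b = −log a` and the convention `x_0 = a`. -/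
noncomputable def xiDef {I : Type*} [Fintype I] [DecidableEq I]
    (Kbar : Finset (I → ℕ)) (μ : I → ℝ) (a : ℝ) (x : (I → ℕ) → ℝ)
    (k k' : I → ℕ) (i : I) : ℝ :=
  (1 / (-Real.log a)) *
    (Real.log ((k' i : ℝ) * xeDef a x (k - Pi.single i 1) * xeDef a x k')
      - Real.log ((k i : ℝ) * xeDef a x k * xeDef a x (k' - Pi.single i 1))) *
    ((k i : ℝ) * μ i * xeDef a x k * xeDef a x (k' - Pi.single i 1)) / xIdxDef Kbar a x i

/-- The set of configurations `k` such that `(k, i)` is an edge. -/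
def edgesF {I : Type*} [Fintype I] [DecidableEq I]
    (Kbar : Finset (I → ℕ)) (i : I) : Finset (I → ℕ) :=
  (Kbar.erase 0).filter (fun k => 1 ≤ k i ∧ k - Pi.single i 1 ∈ Kbar)

/-- `Ξ(x) = ∑_i ∑_{pairs {k,k'}} [ξ_{k,k',i} + ξ_{k',k,i}]`, written as the full double
sum over ordered pairs of edges (the diagonal terms vanish, so the two agree). -/
noncomputable def XiDef {I : Type*} [Fintype I] [DecidableEq I]
    (Kbar : Finset (I → ℕ)) (μ : I → ℝ) (a : ℝ) (x : (I → ℕ) → ℝ) : ℝ :=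
  ∑ i : I, ∑ k ∈ edgesF Kbar i, ∑ k' ∈ edgesF Kbar i, xiDef Kbar μ a x k k' i

/-!
Pairing the two ordered terms of each unordered pair of edges, `ξ_{k,k',i} + ξ_{k',k,i}` equals
`μ_i / (b x_{(i)}) > 0` times `(log u − log v)(v − u)`, where `u = k'_i x_{k−e_i} x_{k'}` and
`v = k_i x_k x_{k'−e_i}` are the two sides of the balance condition. Since `log` is strictly
increasing this is `≤ 0`, with equality exactly when `u = v`; summing over all pairs gives the claim.
-/

lemma log_sub_log_mul_sub_neg {u v : ℝ} (hu : 0 < u) (hv : 0 < v) (huv : u ≠ v) :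
    (Real.log u - Real.log v) * (v - u) < 0 := by
  rcases huv.lt_or_gt with h | h
  · exact mul_neg_of_neg_of_pos (sub_neg.2 (Real.log_lt_log hu h)) (sub_pos.2 h)
  · exact mul_neg_of_pos_of_neg (sub_pos.2 (Real.log_lt_log hv h)) (sub_neg.2 h)

lemma log_sub_log_mul_sub_nonpos {u v : ℝ} (hu : 0 < u) (hv : 0 < v) :
    (Real.log u - Real.log v) * (v - u) ≤ 0 := by
  rcases eq_or_ne u v with rfl | huv
  · simp
  · exact (log_sub_log_mul_sub_neg hu hv huv).le

lemma log_sub_log_mul_sub_eq_zero_iff {u v : ℝ} (hu : 0 < u) (hv : 0 < v) :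
    (Real.log u - Real.log v) * (v - u) = 0 ↔ u = v := by
  refine ⟨fun h => ?_, fun h => by simp [h]⟩
  by_contra huv
  exact (log_sub_log_mul_sub_neg hu hv huv).ne h

lemma Finset.two_mul_sum_sum_eq_sum_sum_add_swap {α M : Type*} [NonAssocSemiring M]
    (s : Finset α) (f : α → α → M) :
    2 * ∑ k ∈ s, ∑ k' ∈ s, f k k' = ∑ k ∈ s, ∑ k' ∈ s, (f k k' + f k' k) := by
  rw [two_mul]
  nth_rw 2 [Finset.sum_comm]
  simp only [← sum_add_distrib]

lemma Finset.sum_sum_sum_eq_zero_iff_of_nonpos {ι α : Type*} {s : Finset ι} {t : ι → Finset α}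
    {f : ι → α → α → ℝ} (hf : ∀ i ∈ s, ∀ k ∈ t i, ∀ k' ∈ t i, f i k k' ≤ 0) :
    ∑ i ∈ s, ∑ k ∈ t i, ∑ k' ∈ t i, f i k k' = 0 ↔
      ∀ i ∈ s, ∀ k ∈ t i, ∀ k' ∈ t i, f i k k' = 0 := by
  have hsum (i) (hi : i ∈ s) (k) (hk : k ∈ t i) : ∑ k' ∈ t i, f i k k' ≤ 0 :=
    sum_nonpos (hf i hi k hk)
  rw [sum_eq_zero_iff_of_nonpos fun i hi => sum_nonpos (hsum i hi)]
  refine forall₂_congr fun i hi => ?_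
  rw [sum_eq_zero_iff_of_nonpos (hsum i hi)]
  exact forall₂_congr fun k hk => sum_eq_zero_iff_of_nonpos (hf i hi k hk)

section Xi

variable {I : Type*} [Fintype I] {Kbar : Finset (I → ℕ)} {a : ℝ}
  {x : (I → ℕ) → ℝ}

lemma xeDef_pos (ha : 0 < a) (hx : ∀ k ∈ Kbar.erase 0, 0 < x k) {m : I → ℕ} (hm : m ∈ Kbar) :
    0 < xeDef a x m := by
  unfold xeDef
  split_ifs with h
  · exact ha
  · exact hx m (mem_erase.2 ⟨h, hm⟩)

variable [DecidableEq I]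

lemma xIdxDef_pos (ha : 0 < a) (hx : ∀ k ∈ Kbar.erase 0, 0 < x k) (i : I) :
    0 < xIdxDef Kbar a x i :=
  add_pos_of_pos_of_nonneg ha (sum_nonneg fun m hm => (hx m (mem_filter.1 hm).1).le)

lemma balance_lhs_pos (ha : 0 < a) (hx : ∀ k ∈ Kbar.erase 0, 0 < x k) {i : I} {k k' : I → ℕ}
    (hk : k ∈ edgesF Kbar i) (hk' : k' ∈ edgesF Kbar i) :
    0 < (k' i : ℝ) * xeDef a x (k - Pi.single i 1) * xeDef a x k' := by
  simp only [edgesF, mem_filter, mem_erase] at hk hk'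
  have hk'i : (0 : ℝ) < k' i := by exact_mod_cast hk'.2.1
  exact mul_pos (mul_pos hk'i (xeDef_pos ha hx hk.2.2)) (xeDef_pos ha hx hk'.1.2)

lemma xiDef_add_xiDef_swap (μ : I → ℝ) (k k' : I → ℕ) (i : I) :
    xiDef Kbar μ a x k k' i + xiDef Kbar μ a x k' k i =
      μ i / (-Real.log a * xIdxDef Kbar a x i) *
        ((Real.log ((k' i : ℝ) * xeDef a x (k - Pi.single i 1) * xeDef a x k')
            - Real.log ((k i : ℝ) * xeDef a x k * xeDef a x (k' - Pi.single i 1))) *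
          ((k i : ℝ) * xeDef a x k * xeDef a x (k' - Pi.single i 1)
            - (k' i : ℝ) * xeDef a x (k - Pi.single i 1) * xeDef a x k')) := by
  unfold xiDef
  rw [mul_right_comm (k' i : ℝ) (xeDef a x k'), mul_right_comm (k i : ℝ) (xeDef a x _)]
  ring

lemma xiDef_add_xiDef_swap_nonpos_and_eq_zero_iff {μ : I → ℝ} (hμ : ∀ i, 0 < μ i)
    (ha : a ∈ Set.Ioo (0 : ℝ) 1) (hx : ∀ k ∈ Kbar.erase 0, 0 < x k) {i : I} {k k' : I → ℕ}
    (hk : k ∈ edgesF Kbar i) (hk' : k' ∈ edgesF Kbar i) :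
    xiDef Kbar μ a x k k' i + xiDef Kbar μ a x k' k i ≤ 0 ∧
      (xiDef Kbar μ a x k k' i + xiDef Kbar μ a x k' k i = 0 ↔
        (k' i : ℝ) * xeDef a x (k - Pi.single i 1) * xeDef a x k' =
          (k i : ℝ) * xeDef a x k * xeDef a x (k' - Pi.single i 1)) := by
  have hu := balance_lhs_pos ha.1 hx hk hk'
  have hv : 0 < (k i : ℝ) * xeDef a x k * xeDef a x (k' - Pi.single i 1) := by
    rw [mul_right_comm]; exact balance_lhs_pos ha.1 hx hk' hk
  have hc : 0 < μ i / (-Real.log a * xIdxDef Kbar a x i) :=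
    div_pos (hμ i) (mul_pos (neg_pos.2 (Real.log_neg ha.1 ha.2)) (xIdxDef_pos ha.1 hx i))
  rw [xiDef_add_xiDef_swap, mul_eq_zero, or_iff_right hc.ne',
    log_sub_log_mul_sub_eq_zero_iff hu hv]
  exact ⟨mul_nonpos_of_nonneg_of_nonpos hc.le (log_sub_log_mul_sub_nonpos hu hv), Iff.rfl⟩

lemma two_mul_XiDef (μ : I → ℝ) :
    2 * XiDef Kbar μ a x = ∑ i : I, ∑ k ∈ edgesF Kbar i, ∑ k' ∈ edgesF Kbar i,
      (xiDef Kbar μ a x k k' i + xiDef Kbar μ a x k' k i) := by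
  rw [XiDef, mul_sum]
  exact sum_congr rfl fun i _ => two_mul_sum_sum_eq_sum_sum_add_swap _ _

end Xi

theorem Xi_nonpos_iff_balance_general
    {I : Type*} [Fintype I] [DecidableEq I]
    (Kbar : Finset (I → ℕ))
    (μ : I → ℝ) (hμ : ∀ i, 0 < μ i)
    (a : ℝ) (ha : a ∈ Set.Ioo (0 : ℝ) 1)
    (x : (I → ℕ) → ℝ) (hx : ∀ k ∈ Kbar.erase 0, 0 < x k) :
    XiDef Kbar μ a x ≤ 0 ∧
      (XiDef Kbar μ a x = 0 ↔
        ∀ i : I, ∀ k ∈ edgesF Kbar i, ∀ k' ∈ edgesF Kbar i,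
          (k' i : ℝ) * xeDef a x (k - Pi.single i 1) * xeDef a x k' =
            (k i : ℝ) * xeDef a x k * xeDef a x (k' - Pi.single i 1)) := by
  have hpair (i) (_ : i ∈ univ) (k) (hk : k ∈ edgesF Kbar i) (k') (hk' : k' ∈ edgesF Kbar i) :=
    xiDef_add_xiDef_swap_nonpos_and_eq_zero_iff hμ ha hx hk hk'
  have hsum_nonpos : 2 * XiDef Kbar μ a x ≤ 0 := by
    rw [two_mul_XiDef]
    exact sum_nonpos fun i hi => sum_nonpos fun k hk =>
      sum_nonpos fun k' hk' => (hpair i hi k hk k' hk').1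
  refine ⟨by linarith, ?_⟩
  rw [← mul_eq_zero_iff_left two_ne_zero, two_mul_XiDef,
    sum_sum_sum_eq_zero_iff_of_nonpos fun i hi k hk k' hk' => (hpair i hi k hk k' hk').1]
  simpa using forall₂_congr fun i hi => forall₂_congr fun k hk =>
    forall₂_congr fun k' hk' => (hpair i hi k hk k' hk').2

/-- `Ξ(x) ≤ 0`, with equality iff the pairwise balance condition
`k'_i x_{k−e_i} x_{k'} = k_i x_k x_{k'−e_i}` holds for every pair of edges. -/
theorem Xi_nonpos_iff_balance
    {I : Type*} [Fintype I] [DecidableEq I] [Nonempty I]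
    (Kbar : Finset (I → ℕ))
    (h0 : (0 : I → ℕ) ∈ Kbar)
    (hunit : ∀ i : I, Pi.single i 1 ∈ Kbar)
    (hmono : ∀ k ∈ Kbar, ∀ k' : I → ℕ, (∀ i, k' i ≤ k i) → k' ∈ Kbar)
    (μ : I → ℝ) (hμ : ∀ i, 0 < μ i)
    (a : ℝ) (ha : a ∈ Set.Ioo (0 : ℝ) 1)
    (x : (I → ℕ) → ℝ) (hx : ∀ k ∈ Kbar.erase 0, 0 < x k) :
    XiDef Kbar μ a x ≤ 0 ∧
      (XiDef Kbar μ a x = 0 ↔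
        ∀ i : I, ∀ k ∈ edgesF Kbar i, ∀ k' ∈ edgesF Kbar i,
          (k' i : ℝ) * xeDef a x (k - Pi.single i 1) * xeDef a x k' =
            (k i : ℝ) * xeDef a x k * xeDef a x (k' - Pi.single i 1)) :=
  Xi_nonpos_iff_balance_general Kbar μ hμ a ha x hx
end

section
/- For every real ν > 0 and every real w with 0 ≤ w ≤ ν, the inequality w + (ν + w)·log(ν/(ν + w)) ≤ −w²/(4ν) holds. -/
/-! With `t = w / ν` the claim reads `t + t² / 4 ≤ (1 + t) log (1 + t)`. The Padé-type lower bound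
`log (1 + t) ≥ 2t / (t + 2)` reduces this to the polynomial inequality `t³ ≤ 2t²`, i.e. `t ≤ 2`. -/

open Real

lemma add_sq_div_four_le_one_add_mul_log_one_add {t : ℝ} (ht0 : 0 ≤ t) (ht2 : t ≤ 2) :
    t + t ^ 2 / 4 ≤ (1 + t) * log (1 + t) :=
  calc t + t ^ 2 / 4 ≤ (1 + t) * (2 * t / (t + 2)) := by
        rw [mul_div_assoc', le_div_iff₀ (by linarith)]
        nlinarith [mul_nonneg (sq_nonneg t) (sub_nonneg.mpr ht2)]
    _ ≤ (1 + t) * log (1 + t) := by gcongr; exact le_log_one_add_of_nonneg ht0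

lemma add_mul_log_div_add_le_neg_sq_div {ν w : ℝ} (hν : 0 < ν) (hw0 : 0 ≤ w) (hw : w ≤ 2 * ν) :
    w + (ν + w) * log (ν / (ν + w)) ≤ -(w ^ 2) / (4 * ν) := by
  obtain ⟨t, rfl⟩ : ∃ t, w = ν * t := ⟨w / ν, by field_simp⟩
  have ht0 : 0 ≤ t := nonneg_of_mul_nonneg_right hw0 hν
  have ht2 : t ≤ 2 := le_of_mul_le_mul_left (by linarith) hν
  have hlog : log (ν / (ν + ν * t)) = -log (1 + t) := by
    rw [← mul_one_add, div_mul_cancel_left₀ hν.ne', log_inv]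
  have hrhs : -(ν * t) ^ 2 / (4 * ν) = -(ν * (t ^ 2 / 4)) := by field_simp
  rw [hlog, hrhs]
  nlinarith [mul_le_mul_of_nonneg_left (add_sq_div_four_le_one_add_mul_log_one_add ht0 ht2) hν.le]

/-- key real-analytic inequality behind the Poisson concentration bound:
for `ν > 0` and `0 ≤ w ≤ ν`, `w + (ν + w)·log(ν/(ν + w)) ≤ −w²/(4ν)`. -/
theorem log_inequality_poisson (ν w : ℝ) (hν : 0 < ν) (hw0 : 0 ≤ w) (hw : w ≤ ν) :
    w + (ν + w) * Real.log (ν / (ν + w)) ≤ -(w ^ 2) / (4 * ν) :=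
  add_mul_log_div_add_le_neg_sq_div hν hw0 (by linarith)
end
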